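/- arXiv:1910.00510 — 5 statements merged into one kernel-verified Lean document; each statement's English description precedes it below -/
import Mathlib

section
/- Fix W > 0, weights w_a ≥ w_b > 0 and normalized noise powers η_b ≥ η_a > 0, and define f(x) = W·(w_a·log₂(x + η_a) − w_b·log₂(x + η_b)). Then f is monotone increasing and concave on [0, ∞). Likewise, for any w > 0 and η > 0 the function x ↦ W·w·log₂(x + η) is monotone increasing and concave on [0, ∞). -/
open Set Real

lemma key_aux (W wa wb ηa ηb : ℝ) (hW : 0 < W) (hwb : 0 < wb) (hwab : wb ≤ wa)
    (hηa : 0 < ηa) (hηab : ηa ≤ ηb) :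
    MonotoneOn
        (fun x => W * (wa * Real.logb 2 (x + ηa) - wb * Real.logb 2 (x + ηb)))
        (Set.Ici (0 : ℝ)) ∧
      ConcaveOn ℝ (Set.Ici (0 : ℝ))
        (fun x => W * (wa * Real.logb 2 (x + ηa) - wb * Real.logb 2 (x + ηb))) := by
  set L2 := Real.log 2 with hL2def
  have hL2 : 0 < L2 := Real.log_pos (by norm_num)
  set f : ℝ → ℝ := fun x => W * (wa * Real.logb 2 (x + ηa) - wb * Real.logb 2 (x + ηb)) with hf
  set f' : ℝ → ℝ := fun x => W * (wa * ((x + ηa)⁻¹ / L2) - wb * ((x + ηb)⁻¹ / L2)) with hf'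
  set f'' : ℝ → ℝ := fun x =>
    W * (wa * (-((x + ηa)^2)⁻¹ / L2) - wb * (-((x + ηb)^2)⁻¹ / L2)) with hf''
  have hmem : ∀ x : ℝ, x ∈ Set.Ioi (-ηa) → 0 < x + ηa ∧ 0 < x + ηb := by
    intro x hx
    constructor <;> nlinarith [mem_Ioi.mp hx]
  have hfd : ∀ x ∈ Set.Ioi (-ηa), HasDerivAt f (f' x) x := by
    intro x hx
    obtain ⟨hpa, hpb⟩ := hmem x hx
    have haa : HasDerivAt (fun y : ℝ => y + ηa) 1 x := (hasDerivAt_id x).add_const ηa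
    have hab : HasDerivAt (fun y : ℝ => y + ηb) 1 x := (hasDerivAt_id x).add_const ηb
    have hla : HasDerivAt (fun y => Real.log (y + ηa)) ((x + ηa)⁻¹) x := by
      simpa [Function.comp_def] using (Real.hasDerivAt_log hpa.ne').comp x haa
    have hlb : HasDerivAt (fun y => Real.log (y + ηb)) ((x + ηb)⁻¹) x := by
      simpa [Function.comp_def] using (Real.hasDerivAt_log hpb.ne').comp x hab
    have := (((hla.div_const L2).const_mul wa).sub ((hlb.div_const L2).const_mul wb)).const_mul W
    exact this
  have hfd' : ∀ x ∈ Set.Ioi (-ηa), HasDerivAt f' (f'' x) x := by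
    intro x hx
    obtain ⟨hpa, hpb⟩ := hmem x hx
    have haa : HasDerivAt (fun y : ℝ => y + ηa) 1 x := (hasDerivAt_id x).add_const ηa
    have hab : HasDerivAt (fun y : ℝ => y + ηb) 1 x := (hasDerivAt_id x).add_const ηb
    have hia : HasDerivAt (fun y : ℝ => (y + ηa)⁻¹) (-((x + ηa)^2)⁻¹) x := by
      simpa [Function.comp_def] using (hasDerivAt_inv hpa.ne').comp x haa
    have hib : HasDerivAt (fun y : ℝ => (y + ηb)⁻¹) (-((x + ηb)^2)⁻¹) x := by
      simpa [Function.comp_def] using (hasDerivAt_inv hpb.ne').comp x hab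
    exact (((hia.div_const L2).const_mul wa).sub ((hib.div_const L2).const_mul wb)).const_mul W
  have hsub : Set.Ici (0:ℝ) ⊆ Set.Ioi (-ηa) := fun x hx => by
    simp only [mem_Ioi]; linarith [mem_Ici.mp hx]
  have hint : interior (Set.Ici (0:ℝ)) = Set.Ioi 0 := interior_Ici
  have hsub' : Set.Ioi (0:ℝ) ⊆ Set.Ioi (-ηa) := fun x hx => by
    simp only [mem_Ioi] at *; linarith
  have hcont : ContinuousOn f (Set.Ici 0) := fun x hx =>
    (hfd x (hsub hx)).differentiableAt.continuousAt.continuousWithinAt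
  have hdiff : DifferentiableOn ℝ f (interior (Set.Ici (0:ℝ))) := by
    rw [hint]
    exact fun x hx => (hfd x (hsub' hx)).differentiableAt.differentiableWithinAt
  have hderiv_eq : ∀ x ∈ Set.Ioi (-ηa), deriv f x = f' x := fun x hx => (hfd x hx).deriv
  have hf'nonneg : ∀ x ∈ Set.Ioi (0:ℝ), 0 ≤ f' x := by
    intro x hx
    have hx0 : (0:ℝ) ≤ x := le_of_lt hx
    have hpa : 0 < x + ηa := by linarith
    have hpb : 0 < x + ηb := by linarith
    have hmul : wb * (x + ηb)⁻¹ ≤ wa * (x + ηa)⁻¹ :=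
      mul_le_mul hwab (inv_anti₀ hpa (by linarith)) (inv_nonneg.mpr hpb.le)
        (hwb.trans_le hwab).le
    show 0 ≤ W * (wa * ((x + ηa)⁻¹ / L2) - wb * ((x + ηb)⁻¹ / L2))
    have key := mul_nonneg (mul_nonneg hW.le (inv_pos.mpr hL2).le) (sub_nonneg.mpr hmul)
    rw [div_eq_mul_inv, div_eq_mul_inv]
    nlinarith [key]
  have hmono : MonotoneOn f (Set.Ici 0) := by
    apply monotoneOn_of_deriv_nonneg (convex_Ici 0) hcont hdiff
    intro x hx
    rw [hint] at hx
    rw [hderiv_eq x (hsub' hx)]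
    exact hf'nonneg x hx
  refine ⟨hmono, ?_⟩
  have hev : ∀ x ∈ Set.Ioi (-ηa), deriv f =ᶠ[nhds x] f' := by
    intro x hx
    exact Filter.eventually_of_mem (isOpen_Ioi.mem_nhds hx) hderiv_eq
  apply concaveOn_of_deriv2_nonpos (convex_Ici 0) hcont hdiff
  · rw [hint]
    intro x hx
    exact (((hev x (hsub' hx)).differentiableAt_iff).mpr
      (hfd' x (hsub' hx)).differentiableAt).differentiableWithinAt
  · rw [hint]
    intro x hx
    have hx' := hsub' hx
    have h2 : deriv (deriv f) x = f'' x := by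
      rw [(hev x hx').deriv_eq]
      exact (hfd' x hx').deriv
    have : deriv^[2] f x = f'' x := by
      simpa [Function.iterate_succ, Function.comp] using h2
    rw [this]
    have hx0 : (0:ℝ) ≤ x := le_of_lt hx
    have hpa : 0 < x + ηa := by linarith
    have hpb : 0 < x + ηb := by linarith
    have hmul : wb * ((x + ηb)^2)⁻¹ ≤ wa * ((x + ηa)^2)⁻¹ :=
      mul_le_mul hwab (inv_anti₀ (pow_pos hpa 2) (by nlinarith))
        (inv_nonneg.mpr (pow_pos hpb 2).le) (hwb.trans_le hwab).le
    show W * (wa * (-((x + ηa)^2)⁻¹ / L2) - wb * (-((x + ηb)^2)⁻¹ / L2)) ≤ 0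
    have key := mul_nonneg (mul_nonneg hW.le (inv_pos.mpr hL2).le) (sub_nonneg.mpr hmul)
    rw [div_eq_mul_inv, div_eq_mul_inv]
    nlinarith [key]

/-- If `w_a ≥ w_b > 0` and `η_b ≥ η_a > 0`, then
`f(x) = W·(w_a·log₂(x + η_a) − w_b·log₂(x + η_b))` is monotone increasing and concave
on `[0, ∞)`; likewise `x ↦ W·w·log₂(x + η)` is monotone increasing and concave on `[0, ∞)`
for any `w, η > 0`. -/
theorem stmt_1
    (W wa wb ηa ηb : ℝ) (hW : 0 < W) (hwb : 0 < wb) (hwab : wb ≤ wa)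
    (hηa : 0 < ηa) (hηab : ηa ≤ ηb) :
    (MonotoneOn
        (fun x => W * (wa * Real.logb 2 (x + ηa) - wb * Real.logb 2 (x + ηb)))
        (Set.Ici (0 : ℝ)) ∧
      ConcaveOn ℝ (Set.Ici (0 : ℝ))
        (fun x => W * (wa * Real.logb 2 (x + ηa) - wb * Real.logb 2 (x + ηb)))) ∧
    ∀ w η : ℝ, 0 < w → 0 < η →
      MonotoneOn (fun x => W * w * Real.logb 2 (x + η)) (Set.Ici (0 : ℝ)) ∧
      ConcaveOn ℝ (Set.Ici (0 : ℝ)) (fun x => W * w * Real.logb 2 (x + η)) := by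
  refine ⟨key_aux W wa wb ηa ηb hW hwb hwab hηa hηab, ?_⟩
  intro w η hw hη
  have h := key_aux W (2*w) w η η hW hw (by linarith) hη le_rfl
  have heq : (fun x => W * (2*w * Real.logb 2 (x + η) - w * Real.logb 2 (x + η)))
      = fun x => W * w * Real.logb 2 (x + η) := by
    funext x; ring
  rw [heq] at h
  exact h
end

section
/- For weights w_b > w_a > 0 and normalized noise powers η_b ≥ η_a > 0, define c₁ = (w_b·η_a − w_a·η_b)/(w_a − w_b) and c₂ = (√w_b·η_a − √w_a·η_b)/(√w_a − √w_b). Then c₂ ≥ c₁; i.e. the inflection point of f lies to the right of its maximizer. -/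
/-!
Both points solve an equation `p / (t + η_a) = q / (t + η_b)`: `c₁` with `(p, q) = (w_a, w_b)`
(the zero of `f'`), `c₂` with `(p, q) = (√w_a, √w_b)` (the zero of `f''`). Writing `w = s²`, the
two solutions differ by exactly `√w_a √w_b (η_b − η_a) / (w_b − w_a) ≥ 0`.
-/

/-- The solution `t` of `p / (t + x) = q / (t + y)`. -/
noncomputable def balancePoint (p q x y : ℝ) : ℝ := (q * x - p * y) / (p - q)

lemma balancePoint_sub_balancePoint_sq {a b : ℝ} (hab : a ≠ b) (hab' : a + b ≠ 0) (x y : ℝ) :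
    balancePoint a b x y - balancePoint (a ^ 2) (b ^ 2) x y = a * b * (x - y) / (a ^ 2 - b ^ 2) := by
  have hsq : a ^ 2 - b ^ 2 ≠ 0 := by
    rw [sq_sub_sq]; exact mul_ne_zero hab' (sub_ne_zero.mpr hab)
  unfold balancePoint
  field_simp [sub_ne_zero.mpr hab]
  ring

lemma balancePoint_sq_le {a b x y : ℝ} (ha : 0 ≤ a) (hab : a < b) (hxy : x ≤ y) :
    balancePoint (a ^ 2) (b ^ 2) x y ≤ balancePoint a b x y := by
  have hdiff := balancePoint_sub_balancePoint_sq hab.ne (by linarith) x y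
  have hnonneg : 0 ≤ a * b * (x - y) / (a ^ 2 - b ^ 2) := by
    apply div_nonneg_of_nonpos
    · exact mul_nonpos_of_nonneg_of_nonpos (mul_nonneg ha (ha.trans hab.le)) (sub_nonpos.mpr hxy)
    · exact sub_nonpos.mpr (pow_le_pow_left₀ ha hab.le 2)
  linarith

theorem stmt_4_general
    (wa wb ηa ηb : ℝ) (hwa : 0 < wa) (hwab : wa < wb)
    (hηab : ηa ≤ ηb)
    (c₁ c₂ : ℝ)
    (hc₁ : c₁ = (wb * ηa - wa * ηb) / (wa - wb))
    (hc₂ : c₂ = (Real.sqrt wb * ηa - Real.sqrt wa * ηb) / (Real.sqrt wa - Real.sqrt wb)) :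
    c₁ ≤ c₂ := by
  have hc₁' : c₁ = balancePoint (√wa ^ 2) (√wb ^ 2) ηa ηb := by
    rw [hc₁, Real.sq_sqrt hwa.le, Real.sq_sqrt (hwa.trans hwab).le, balancePoint]
  rw [hc₁', hc₂]
  exact balancePoint_sq_le (Real.sqrt_nonneg wa) (Real.sqrt_lt_sqrt hwa.le hwab) hηab

/-- For weights `w_b > w_a > 0` and noise powers `η_b ≥ η_a > 0`, the inflection point
`c₂ = (√w_b·η_a − √w_a·η_b)/(√w_a − √w_b)` lies to the right of the maximizer
`c₁ = (w_b·η_a − w_a·η_b)/(w_a − w_b)`, i.e. `c₂ ≥ c₁`. -/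
theorem stmt_4
    (wa wb ηa ηb : ℝ) (hwa : 0 < wa) (hwab : wa < wb)
    (hηa : 0 < ηa) (hηab : ηa ≤ ηb)
    (c₁ c₂ : ℝ)
    (hc₁ : c₁ = (wb * ηa - wa * ηb) / (wa - wb))
    (hc₂ : c₂ = (Real.sqrt wb * ηa - Real.sqrt wa * ηb) / (Real.sqrt wa - Real.sqrt wb)) :
    c₁ ≤ c₂ :=
  stmt_4_general wa wb ηa ηb hwa hwab hηab c₁ c₂ hc₁ hc₂
end

section
/- Fix K ≥ 1, W > 0, weights w_1, …, w_K > 0 with the convention w_0 = 0, normalized noise powers η_0 ≥ η_1 ≥ … ≥ η_K > 0, and a power budget P̄ > 0. For 1 ≤ q ≤ q' ≤ K define f_{q,q'}(x) = W·(w_{q'}·log₂(x + η_{q'}) − w_{q−1}·log₂(x + η_{q−1})) and f_l = f_{l,l}. Suppose (x_1, …, x_K) maximizes Σ_{l=1}^{K} f_l(x_l) over the chain set {P̄ ≥ x_1 ≥ x_2 ≥ … ≥ x_K ≥ 0}. If 1 ≤ q ≤ q' ≤ K is a maximal constant block, i.e. x_q = x_{q+1} = … = x_{q'}, and (q = 1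 or x_{q−1} > x_q), and (q' = K or x_{q'} > x_{q'+1}), then the common value x_q is a maximizer of f_{q,q'} over the interval [0, P̄]. -/
/-- `f_{q,q'}(y) = W·(w_{q'}·log₂(y + η_{q'}) − w_{q−1}·log₂(y + η_{q−1}))`. -/
noncomputable def fqq (W : ℝ) (w η : ℕ → ℝ) (q q' : ℕ) (y : ℝ) : ℝ :=
  W * (w q' * Real.logb 2 (y + η q') - w (q - 1) * Real.logb 2 (y + η (q - 1)))

/-- The chain set `C(P) = {x : P ≥ x 1 ≥ … ≥ x K ≥ 0}` (only coordinates `1, …, K` matter). -/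
def chainSet (K : ℕ) (P : ℝ) : Set (ℕ → ℝ) :=
  {x | x 1 ≤ P ∧ (∀ l, 1 ≤ l → l < K → x (l + 1) ≤ x l) ∧ 0 ≤ x K}

/-- The single-carrier objective `∑_{l=1}^{K} f_l(x_l)` with `f_l = f_{l,l}`. -/
noncomputable def objSC (K : ℕ) (W : ℝ) (w η : ℕ → ℝ) (x : ℕ → ℝ) : ℝ :=
  ∑ l ∈ Finset.Icc 1 K, fqq W w η l l (x l)

/-- If the derivative-numerator is nonpositive at `s`, it stays nonpositive at `t ≥ s`. -/
lemma Dmono_le (A B α β s t : ℝ) (hA : 0 < A) (hB : 0 ≤ B) (hβ : 0 < β)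
    (hαβ : β ≤ α) (hs : 0 ≤ s) (hst : s ≤ t)
    (h : A * (s + β)⁻¹ - B * (s + α)⁻¹ ≤ 0) :
    A * (t + β)⁻¹ - B * (t + α)⁻¹ ≤ 0 := by
  have hsβ : 0 < s + β := by linarith
  have hsα : 0 < s + α := by linarith
  have htβ : 0 < t + β := by linarith
  have htα : 0 < t + α := by linarith
  have h1 : A * (s + α) ≤ B * (s + β) := by
    rw [sub_nonpos, ← div_eq_mul_inv, ← div_eq_mul_inv, div_le_div_iff₀ hsβ hsα] at h
    exact h
  have hAB : A ≤ B := by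
    by_contra hBA
    push_neg at hBA
    nlinarith [mul_pos (sub_pos.mpr hBA) hsβ, mul_nonneg hA.le (sub_nonneg.mpr hαβ)]
  rw [sub_nonpos, ← div_eq_mul_inv, ← div_eq_mul_inv, div_le_div_iff₀ htβ htα]
  nlinarith [mul_le_mul_of_nonneg_right hAB (sub_nonneg.mpr hst)]

/-- Strict version. -/
lemma Dmono_lt (A B α β s t : ℝ) (hA : 0 < A) (hB : 0 ≤ B) (hβ : 0 < β)
    (hαβ : β ≤ α) (hs : 0 ≤ s) (hst : s ≤ t)
    (h : A * (s + β)⁻¹ - B * (s + α)⁻¹ < 0) :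
    A * (t + β)⁻¹ - B * (t + α)⁻¹ < 0 := by
  have hsβ : 0 < s + β := by linarith
  have hsα : 0 < s + α := by linarith
  have htβ : 0 < t + β := by linarith
  have htα : 0 < t + α := by linarith
  have h1 : A * (s + α) < B * (s + β) := by
    rw [sub_neg, ← div_eq_mul_inv, ← div_eq_mul_inv, div_lt_div_iff₀ hsβ hsα] at h
    exact h
  have hAB : A ≤ B := by
    by_contra hBA
    push_neg at hBA
    nlinarith [mul_pos (sub_pos.mpr hBA) hsβ, mul_nonneg hA.le (sub_nonneg.mpr hαβ)]
  rw [sub_neg, ← div_eq_mul_inv, ← div_eq_mul_inv, div_lt_div_iff₀ htβ htα]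
  nlinarith [mul_le_mul_of_nonneg_right hAB (sub_nonneg.mpr hst)]

/-- Telescoping: the sum of the single-user objectives over a block is the merged one. -/
lemma tele_fqq (W : ℝ) (w η : ℕ → ℝ) (c : ℝ) (q : ℕ) (hq : 1 ≤ q) :
    ∀ q', q ≤ q' → ∑ l ∈ Finset.Icc q q', fqq W w η l l c = fqq W w η q q' c := by
  intro q' hq'
  induction q', hq' using Nat.le_induction with
  | base => simp
  | succ n hn ih =>
      rw [Finset.sum_Icc_succ_top (by omega), ih]
      simp only [fqq, Nat.add_sub_cancel]
      ring

/-- Derivative of the merged objective. -/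
lemma hasDeriv_fqq (W : ℝ) (w η : ℕ → ℝ) (q q' : ℕ)
    (hβ : 0 < η q') (hα : 0 < η (q - 1)) (t : ℝ) (ht : 0 ≤ t) :
    HasDerivAt (fqq W w η q q')
      ((W / Real.log 2) * (w q' * (t + η q')⁻¹ - w (q - 1) * (t + η (q - 1))⁻¹)) t := by
  have hfun : fqq W w η q q' = fun y =>
      (W / Real.log 2) * (w q' * Real.log (y + η q') - w (q - 1) * Real.log (y + η (q - 1))) := by
    funext y
    simp only [fqq, Real.logb]
    ring
  have h1 : HasDerivAt (fun y : ℝ => Real.log (y + η q')) ((t + η q')⁻¹) t := by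
    have hid : HasDerivAt (fun y : ℝ => y + η q') 1 t := (hasDerivAt_id t).add_const _
    have := (Real.hasDerivAt_log (by positivity : t + η q' ≠ 0)).comp t hid
    rw [mul_one] at this
    exact this
  have h2 : HasDerivAt (fun y : ℝ => Real.log (y + η (q - 1))) ((t + η (q - 1))⁻¹) t := by
    have hid : HasDerivAt (fun y : ℝ => y + η (q - 1)) 1 t := (hasDerivAt_id t).add_const _
    have := (Real.hasDerivAt_log (by positivity : t + η (q - 1) ≠ 0)).comp t hid
    rw [mul_one] at this
    exact this
  rw [hfun]
  exact ((h1.const_mul (w q')).sub (h2.const_mul (w (q - 1)))).const_mul (W / Real.log 2)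

/-- On a maximal constant block `q, …, q'` of a maximizer of `∑_l f_l(x_l)` over the
chain set `{P ≥ x_1 ≥ … ≥ x_K ≥ 0}`, the common value `x_q` maximizes `f_{q,q'}`
over `[0, P]`. -/
theorem stmt_6
    (K : ℕ) (hK : 1 ≤ K) (W : ℝ) (hW : 0 < W)
    (w η : ℕ → ℝ) (hw0 : w 0 = 0)
    (hw : ∀ l, 1 ≤ l → l ≤ K → 0 < w l)
    (hη_pos : ∀ l, l ≤ K → 0 < η l)
    (hη_mono : ∀ l, l < K → η (l + 1) ≤ η l)
    (P : ℝ) (hP : 0 < P)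
    (x : ℕ → ℝ) (hxC : x ∈ chainSet K P)
    (hmax : ∀ y ∈ chainSet K P, objSC K W w η y ≤ objSC K W w η x)
    (q q' : ℕ) (hq : 1 ≤ q) (hqq' : q ≤ q') (hq' : q' ≤ K)
    (hblock : ∀ l, q ≤ l → l ≤ q' → x l = x q)
    (hleft : q = 1 ∨ x q < x (q - 1))
    (hright : q' = K ∨ x (q' + 1) < x q') :
    x q ∈ Set.Icc (0 : ℝ) P ∧
      ∀ y ∈ Set.Icc (0 : ℝ) P, fqq W w η q q' y ≤ fqq W w η q q' (x q) := by
  obtain ⟨hx1P, hchain, hxK0⟩ := hxC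
  -- x is antitone on [1, K]
  have hanti : ∀ i j : ℕ, 1 ≤ i → i ≤ j → j ≤ K → x j ≤ x i := by
    intro i j hi hij
    induction j, hij using Nat.le_induction with
    | base => intro _; exact le_rfl
    | succ n hn ih =>
        intro h
        exact le_trans (hchain n (by omega) (by omega)) (ih (by omega))
  -- η is antitone on [0, K]
  have hηanti : ∀ i j : ℕ, i ≤ j → j ≤ K → η j ≤ η i := by
    intro i j hij
    induction j, hij using Nat.le_induction with
    | base => intro _; exact le_rfl
    | succ n hn ih =>
        intro h
        exact le_trans (hη_mono n (by omega)) (ih (by omega))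
  have hm0 : 0 ≤ x q := le_trans hxK0 (hanti q K hq (le_trans hqq' hq') le_rfl)
  have hmP : x q ≤ P := le_trans (hanti 1 q le_rfl hq (le_trans hqq' hq')) hx1P
  -- the block perturbation argument
  have hpert : ∀ t : ℝ, 0 ≤ t → t ≤ P → (2 ≤ q → t ≤ x (q - 1)) →
      (q' < K → x (q' + 1) ≤ t) → fqq W w η q q' t ≤ fqq W w η q q' (x q) := by
    intro t ht0 htP hup hdown
    set z : ℕ → ℝ := fun l => if q ≤ l ∧ l ≤ q' then t else x l with hzdef
    have hzmem : z ∈ chainSet K P := by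
      refine ⟨?_, ?_, ?_⟩
      · by_cases h1 : q ≤ 1 ∧ 1 ≤ q'
        · simp only [hzdef, if_pos h1]; exact htP
        · simp only [hzdef, if_neg h1]; exact hx1P
      · intro l hl1 hlK
        by_cases hA : q ≤ l ∧ l ≤ q' <;> by_cases hB : q ≤ l + 1 ∧ l + 1 ≤ q'
        · simp only [hzdef, if_pos hA, if_pos hB]; exact le_rfl
        · -- l = q'
          have hl' : l = q' := by omega
          simp only [hzdef, if_pos hA, if_neg hB]
          rw [hl']
          exact hdown (by omega)
        · -- l = q - 1
          have hl' : l = q - 1 := by omega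
          simp only [hzdef, if_neg hA, if_pos hB]
          rw [hl']
          exact hup (by omega)
        · simp only [hzdef, if_neg hA, if_neg hB]
          exact hchain l hl1 hlK
      · by_cases hA : q ≤ K ∧ K ≤ q'
        · simp only [hzdef, if_pos hA]; exact ht0
        · simp only [hzdef, if_neg hA]; exact hxK0
    have hobj := hmax z hzmem
    have hdiff : ∀ l ∈ Finset.Icc 1 K, fqq W w η l l (z l) - fqq W w η l l (x l)
        = if q ≤ l ∧ l ≤ q' then fqq W w η l l t - fqq W w η l l (x q) else 0 := by
      intro l hl
      by_cases h : q ≤ l ∧ l ≤ q'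
      · rw [if_pos h]
        simp only [hzdef, if_pos h]
        rw [hblock l h.1 h.2]
      · rw [if_neg h]
        simp only [hzdef, if_neg h, sub_self]
    have hfil : (Finset.Icc 1 K).filter (fun l => q ≤ l ∧ l ≤ q') = Finset.Icc q q' := by
      ext l
      simp only [Finset.mem_filter, Finset.mem_Icc]
      omega
    have hsum : objSC K W w η z - objSC K W w η x
        = (∑ l ∈ Finset.Icc q q', fqq W w η l l t)
          - ∑ l ∈ Finset.Icc q q', fqq W w η l l (x q) := by
      unfold objSC
      rw [← Finset.sum_sub_distrib, Finset.sum_congr rfl hdiff, ← Finset.sum_filter, hfil,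
        Finset.sum_sub_distrib]
    have hble : (∑ l ∈ Finset.Icc q q', fqq W w η l l t)
        ≤ ∑ l ∈ Finset.Icc q q', fqq W w η l l (x q) := by linarith
    rwa [tele_fqq W w η t q hq q' hqq', tele_fqq W w η (x q) q hq q' hqq'] at hble
  -- package the local maximality interval [L, U]
  obtain ⟨L, U, hL0, hLxq, hxqU, hUP, hLor, hUor, hloc⟩ :
      ∃ L U : ℝ, 0 ≤ L ∧ L ≤ x q ∧ x q ≤ U ∧ U ≤ P ∧ (L = 0 ∨ L < x q) ∧
        (U = P ∨ x q < U) ∧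
        ∀ t, L ≤ t → t ≤ U → fqq W w η q q' t ≤ fqq W w η q q' (x q) := by
    refine ⟨if q' = K then 0 else x (q' + 1), if q = 1 then P else x (q - 1),
      ?_, ?_, ?_, ?_, ?_, ?_, ?_⟩
    · split_ifs with h
      · exact le_rfl
      · exact le_trans hxK0 (hanti (q' + 1) K (by omega) (by omega) le_rfl)
    · split_ifs with h
      · exact hm0
      · have h1 := hright.resolve_left h
        rw [hblock q' hqq' le_rfl] at h1
        exact h1.le
    · split_ifs with h
      · exact hmP
      · have h1 := hchain (q - 1) (by omega) (by omega)
        rwa [show q - 1 + 1 = q by omega] at h1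
    · split_ifs with h
      · exact le_rfl
      · exact le_trans (hanti 1 (q - 1) le_rfl (by omega) (by omega)) hx1P
    · split_ifs with h
      · exact Or.inl rfl
      · refine Or.inr ?_
        have h1 := hright.resolve_left h
        rwa [hblock q' hqq' le_rfl] at h1
    · split_ifs with h
      · exact Or.inl rfl
      · exact Or.inr (hleft.resolve_left h)
    · intro t h1 h2
      refine hpert t ?_ ?_ ?_ ?_
      · split_ifs at h1 with h
        · exact h1
        · exact le_trans (le_trans hxK0 (hanti (q' + 1) K (by omega) (by omega) le_rfl)) h1
      · split_ifs at h2 with h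
        · exact h2
        · exact le_trans h2 (le_trans (hanti 1 (q - 1) le_rfl (by omega) (by omega)) hx1P)
      · intro hq2
        rw [if_neg (by omega : ¬ q = 1)] at h2
        exact h2
      · intro hq'K
        rw [if_neg (by omega : ¬ q' = K)] at h1
        exact h1
  -- analysis part
  set g : ℝ → ℝ := fqq W w η q q' with hgdef
  set gd : ℝ → ℝ := fun t =>
    (W / Real.log 2) * (w q' * (t + η q')⁻¹ - w (q - 1) * (t + η (q - 1))⁻¹) with hgddef
  have hβ : 0 < η q' := hη_pos q' hq'
  have hα : 0 < η (q - 1) := hη_pos (q - 1) (by omega)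
  have hαβ : η q' ≤ η (q - 1) := hηanti (q - 1) q' (by omega) hq'
  have hAw : 0 < w q' := hw q' (by omega) hq'
  have hBw : 0 ≤ w (q - 1) := by
    by_cases h : q = 1
    · rw [show q - 1 = 0 by omega, hw0]
    · exact (hw (q - 1) (by omega) (by omega)).le
  have hWlog : 0 < W / Real.log 2 := div_pos hW (Real.log_pos one_lt_two)
  have hderiv : ∀ t : ℝ, 0 ≤ t → HasDerivAt g (gd t) t := fun t ht =>
    hasDeriv_fqq W w η q q' hβ hα t ht
  have hmvt : ∀ a b : ℝ, 0 ≤ a → a < b →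
      ∃ ξ, a < ξ ∧ ξ < b ∧ gd ξ = (g b - g a) / (b - a) := by
    intro a b ha hab
    have hcont : ContinuousOn g (Set.Icc a b) := fun s hs =>
      ((hderiv s (le_trans ha hs.1)).continuousAt).continuousWithinAt
    obtain ⟨c, hc, hceq⟩ := exists_hasDerivAt_eq_slope g gd hab hcont
      (fun s hs => hderiv s (le_trans ha hs.1.le))
    exact ⟨c, hc.1, hc.2, hceq⟩
  -- sign transfer helpers
  have hQle : ∀ s t : ℝ, 0 ≤ s → s ≤ t → gd s ≤ 0 → gd t ≤ 0 := by
    intro s t hs hst h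
    have hDs : w q' * (s + η q')⁻¹ - w (q - 1) * (s + η (q - 1))⁻¹ ≤ 0 := by
      by_contra hD
      push_neg at hD
      have := mul_pos hWlog hD
      rw [hgddef] at h
      simp only at h
      linarith
    have hDt := Dmono_le (w q') (w (q - 1)) (η (q - 1)) (η q') s t hAw hBw hβ hαβ hs hst hDs
    rw [hgddef]
    simp only
    exact mul_nonpos_of_nonneg_of_nonpos hWlog.le hDt
  have hQlt : ∀ s t : ℝ, 0 ≤ s → s ≤ t → gd s < 0 → gd t < 0 := by
    intro s t hs hst h
    have hDs : w q' * (s + η q')⁻¹ - w (q - 1) * (s + η (q - 1))⁻¹ < 0 := by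
      by_contra hD
      push_neg at hD
      have := mul_nonneg hWlog.le hD
      rw [hgddef] at h
      simp only at h
      linarith
    have hDt := Dmono_lt (w q') (w (q - 1)) (η (q - 1)) (η q') s t hAw hBw hβ hαβ hs hst hDs
    rw [hgddef]
    simp only
    exact mul_neg_of_pos_of_neg hWlog hDt
  refine ⟨⟨hm0, hmP⟩, ?_⟩
  intro y hy
  obtain ⟨hy0, hyP⟩ := hy
  show g y ≤ g (x q)
  rcases le_or_gt y U with h1 | h1
  · rcases le_or_gt L y with h2 | h2
    · exact hloc y h2 h1
    · -- y < L
      have hLpos : 0 < L := lt_of_le_of_lt hy0 h2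
      have hLlt : L < x q := by
        rcases hLor with h | h
        · exact absurd h (by linarith)
        · exact h
      obtain ⟨ξ1, hξ1a, hξ1b, hξ1eq⟩ := hmvt L (x q) hL0 hLlt
      obtain ⟨ξ2, hξ2a, hξ2b, hξ2eq⟩ := hmvt y L hy0 h2
      have hgL : g L ≤ g (x q) := hloc L le_rfl (le_trans hLlt.le hxqU)
      have h3 : 0 ≤ gd ξ1 := by
        rw [hξ1eq]
        exact div_nonneg (by linarith) (by linarith)
      by_contra hcon
      push_neg at hcon
      have h4 : gd ξ2 < 0 := by
        rw [hξ2eq]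
        exact div_neg_of_neg_of_pos (by linarith) (by linarith)
      have := hQlt ξ2 ξ1 (by linarith) (by linarith) h4
      linarith
  · -- U < y
    have hUltP : U < P := lt_of_lt_of_le h1 hyP
    have hxqlt : x q < U := by
      rcases hUor with h | h
      · exact absurd h (by linarith)
      · exact h
    have hgU : g U ≤ g (x q) := hloc U (le_trans hLxq hxqlt.le) le_rfl
    obtain ⟨ξ1, hξ1a, hξ1b, hξ1eq⟩ := hmvt (x q) U hm0 hxqlt
    have h3 : gd ξ1 ≤ 0 := by
      rw [hξ1eq]
      exact div_nonpos_of_nonpos_of_nonneg (by linarith) (by linarith)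
    obtain ⟨ξ2, hξ2a, hξ2b, hξ2eq⟩ := hmvt U y (by linarith) h1
    have h4 : gd ξ2 ≤ 0 := hQle ξ1 ξ2 (by linarith) (by linarith) h3
    rw [hξ2eq] at h4
    rcases div_nonpos_iff.mp h4 with ⟨ha, hb⟩ | ⟨ha, hb⟩
    · linarith
    · linarith
end

section
/- Fix K ≥ 1, W > 0, weights w_1, …, w_K > 0 with w_0 = 0, normalized noise powers η_0 ≥ η_1 ≥ … ≥ η_K > 0, a budget P̄ > 0 and an integer M ≥ 1. With f_l(x) = W·(w_l·log₂(x + η_l) − w_{l−1}·log₂(x + η_{l−1})) and x_{K+1} = 0, every maximizer (x_1, …, x_K) of Σ_{l=1}^{K} f_l(x_l) over the feasible set {P̄ ≥ x_1 ≥ … ≥ x_K ≥ 0 and |{l : x_l > x_{l+1}}| ≤ M} satisfies x_1 = P̄, i.e. the total budget is fully used. -/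
/-- Number of active users `|{l : x_l > x_{l+1}}|`, with the convention `x_{K+1} = 0`. -/
noncomputable def activeCount (K : ℕ) (x : ℕ → ℝ) : ℕ :=
  {l : ℕ | 1 ≤ l ∧ l ≤ K ∧ (if l = K then 0 else x (l + 1)) < x l}.ncard

/-- SIC-constrained feasible set: chain constraints plus at most `M` active users. -/
def sicSet (K M : ℕ) (P : ℝ) : Set (ℕ → ℝ) :=
  {x | x ∈ chainSet K P ∧ activeCount K x ≤ M}

open Finset in
lemma fqq_telescope (W : ℝ) (w η : ℕ → ℝ) (hw0 : w 0 = 0) (c : ℝ) (j : ℕ) :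
    ∑ l ∈ Icc 1 j, fqq W w η l l c = W * (w j * Real.logb 2 (c + η j)) := by
  induction j with
  | zero => simp [hw0]
  | succ n ih =>
    rw [sum_Icc_succ_top (by omega), ih]
    simp only [fqq, Nat.add_sub_cancel]
    ring

lemma antitoneOn_of_mem_chainSet {K : ℕ} {P : ℝ} {x : ℕ → ℝ} (hx : x ∈ chainSet K P) :
    AntitoneOn x (Set.Icc 1 K) :=
  antitoneOn_of_succ_le Set.ordConnected_Icc fun l _ hl hsl => by
    rw [Order.succ_eq_add_one] at hsl ⊢
    exact hx.2.1 l hl.1 (by grind)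

lemma nonneg_of_mem_chainSet {K : ℕ} {P : ℝ} {x : ℕ → ℝ} (hx : x ∈ chainSet K P) {l : ℕ}
    (hl : l ∈ Set.Icc 1 K) : 0 ≤ x l :=
  hx.2.2.trans (antitoneOn_of_mem_chainSet hx hl ⟨hl.1.trans hl.2, le_rfl⟩ hl.2)

lemma objSC_eq_of_eqOn_Icc (K : ℕ) (W : ℝ) (w η : ℕ → ℝ) (hw0 : w 0 = 0) {x : ℕ → ℝ} {c : ℝ}
    {j : ℕ} (hjK : j ≤ K) (hx : Set.EqOn x (fun _ ↦ c) (Set.Icc 1 j)) :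
    objSC K W w η x =
      W * (w j * Real.logb 2 (c + η j)) + ∑ l ∈ Finset.Ioc j K, fqq W w η l l (x l) := by
  have Icc_one (n : ℕ) : Finset.Icc 1 n = Finset.Ioc 0 n := Finset.Icc_add_one_left_eq_Ioc 0 n
  rw [objSC, ← fqq_telescope W w η hw0 c j, Icc_one, Icc_one,
    ← Finset.sum_Ioc_consecutive _ (Nat.zero_le j) hjK]
  congr 1
  exact Finset.sum_congr rfl fun l hl ↦ by rw [hx (Finset.mem_Ioc.mp hl)]

def activeSet (K : ℕ) (x : ℕ → ℝ) : Set ℕ :=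
  {l | 1 ≤ l ∧ l ≤ K ∧ (if l = K then 0 else x (l + 1)) < x l}

lemma activeSet_subset_Icc (K : ℕ) (x : ℕ → ℝ) : activeSet K x ⊆ Set.Icc 1 K :=
  fun _ hl ↦ ⟨hl.1, hl.2.1⟩

lemma activeCount_eq_ncard_activeSet (K : ℕ) (x : ℕ → ℝ) :
    activeCount K x = (activeSet K x).ncard :=
  rfl

def raisePrefix (x : ℕ → ℝ) (j : ℕ) (P : ℝ) : ℕ → ℝ :=
  fun l ↦ if l ≤ j then P else x l

lemma raisePrefix_mem_chainSet {K : ℕ} {P : ℝ} {x : ℕ → ℝ} (hx : x ∈ chainSet K P) (hP : 0 ≤ P)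
    (j : ℕ) : raisePrefix x j P ∈ chainSet K P := by
  refine ⟨?_, fun l hl hlK ↦ ?_, ?_⟩ <;> simp only [raisePrefix]
  · split_ifs
    exacts [le_rfl, hx.1]
  · split_ifs
    · exact le_rfl
    · omega
    · exact (antitoneOn_of_mem_chainSet hx ⟨le_rfl, by omega⟩ ⟨by omega, hlK⟩ (by omega)).trans hx.1
    · exact hx.2.1 l hl hlK
  · split_ifs
    exacts [hP, hx.2.2]

lemma activeSet_raisePrefix_subset {K j : ℕ} (hjK : j ≤ K) (x : ℕ → ℝ) (P : ℝ) :
    activeSet K (raisePrefix x j P) ⊆ insert j {l ∈ activeSet K x | j < l} := by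
  rintro l ⟨hl1, hlK, hlt⟩
  rcases lt_trichotomy l j with hlj | rfl | hjl
  · simp [raisePrefix, hlj.le, Nat.add_one_le_of_lt hlj, (hlj.trans_le hjK).ne] at hlt
  · exact Set.mem_insert l _
  · refine Or.inr ⟨⟨hl1, hlK, ?_⟩, hjl⟩
    simpa [raisePrefix, hjl.not_ge, (hjl.trans (Nat.lt_succ_self l)).not_ge] using hlt

lemma activeCount_raisePrefix_le {K j : ℕ} (hjK : j ≤ K) {x : ℕ → ℝ}
    (hj : j < K → j ∈ activeSet K x) (P : ℝ) :
    activeCount K (raisePrefix x j P) ≤ max 1 (activeCount K x) := by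
  rw [activeCount_eq_ncard_activeSet, activeCount_eq_ncard_activeSet]
  have hsub := activeSet_raisePrefix_subset hjK x P
  rcases hjK.lt_or_eq with hjK | rfl
  · refine le_max_of_le_right (Set.ncard_le_ncard (hsub.trans ?_)
      ((Set.finite_Icc 1 K).subset (activeSet_subset_Icc K x)))
    exact Set.insert_subset (hj hjK) (Set.sep_subset _ _)
  · refine le_max_of_le_left ((Set.ncard_le_ncard (hsub.trans ?_)).trans_eq (Set.ncard_singleton j))
    rintro l (rfl | ⟨hl, hjl⟩)
    exacts [rfl, absurd hl.2.1 hjl.not_ge]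

lemma objSC_raisePrefix (K : ℕ) (W : ℝ) (w η : ℕ → ℝ) (hw0 : w 0 = 0) (x : ℕ → ℝ)
    {j : ℕ} (hjK : j ≤ K) (P : ℝ) :
    objSC K W w η (raisePrefix x j P) =
      W * (w j * Real.logb 2 (P + η j)) + ∑ l ∈ Finset.Ioc j K, fqq W w η l l (x l) := by
  rw [objSC_eq_of_eqOn_Icc K W w η hw0 (x := raisePrefix x j P) hjK fun l hl ↦ if_pos hl.2]
  congr 1
  exact Finset.sum_congr rfl fun l hl ↦ by rw [raisePrefix, if_neg (Finset.mem_Ioc.mp hl).1.not_ge]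

theorem stmt_7_general
    (K M : ℕ) (hK : 1 ≤ K) (hM : 1 ≤ M) (W : ℝ) (hW : 0 < W)
    (w η : ℕ → ℝ) (hw0 : w 0 = 0)
    (hw : ∀ l, 1 ≤ l → l ≤ K → 0 < w l)
    (hη_pos : ∀ l, l ≤ K → 0 < η l)
    (P : ℝ)
    (x : ℕ → ℝ) (hx : x ∈ sicSet K M P)
    (hmax : ∀ y ∈ sicSet K M P, objSC K W w η y ≤ objSC K W w η x) :
    x 1 = P := by
  obtain ⟨hxC, hcount⟩ := hx
  by_contra hne
  have hx1P : x 1 < P := lt_of_le_of_ne hxC.1 hne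
  have hx1 : 0 ≤ x 1 := nonneg_of_mem_chainSet hxC ⟨le_rfl, hK⟩
  set j := Nat.findGreatest (fun l ↦ x l = x 1) K
  have hj1 : 1 ≤ j := Nat.le_findGreatest (P := fun l ↦ x l = x 1) hK rfl
  have hjK : j ≤ K := Nat.findGreatest_le K
  have hxj : x j = x 1 := Nat.findGreatest_spec (P := fun l ↦ x l = x 1) hK rfl
  have hanti := antitoneOn_of_mem_chainSet hxC
  have hconst : Set.EqOn x (fun _ ↦ x 1) (Set.Icc 1 j) := fun l hl ↦
    le_antisymm (hanti ⟨le_rfl, hK⟩ ⟨hl.1, hl.2.trans hjK⟩ hl.1)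
      (hxj ▸ hanti ⟨hl.1, hl.2.trans hjK⟩ ⟨hj1, hjK⟩ hl.2)
  have hactive : j < K → j ∈ activeSet K x := fun hjK' ↦ ⟨hj1, hjK, by
    rw [if_neg hjK'.ne, hxj]
    exact (hxj ▸ hxC.2.1 j hj1 hjK').lt_of_ne
      (Nat.findGreatest_is_greatest (Nat.lt_succ_self j) hjK')⟩
  have hy : raisePrefix x j P ∈ sicSet K M P :=
    ⟨raisePrefix_mem_chainSet hxC (hx1.trans hx1P.le) j,
      (activeCount_raisePrefix_le hjK hactive P).trans (max_le hM hcount)⟩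
  have hobj : objSC K W w η x < objSC K W w η (raisePrefix x j P) := by
    rw [objSC_eq_of_eqOn_Icc K W w η hw0 hjK hconst, objSC_raisePrefix K W w η hw0 x hjK P]
    have hlog : Real.logb 2 (x 1 + η j) < Real.logb 2 (P + η j) :=
      Real.logb_lt_logb one_lt_two (by linarith [hη_pos j hjK]) (by linarith)
    exact add_lt_add_left
      (mul_lt_mul_of_pos_left (mul_lt_mul_of_pos_left hlog (hw j hj1 hjK)) hW) _
  exact (hmax _ hy).not_gt hobj

/-- Every maximizer of `∑_{l=1}^{K} f_l(x_l)` over the SIC-constrained feasible set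
`{P ≥ x_1 ≥ … ≥ x_K ≥ 0, |{l : x_l > x_{l+1}}| ≤ M}` uses the full budget: `x 1 = P`. -/
theorem stmt_7
    (K M : ℕ) (hK : 1 ≤ K) (hM : 1 ≤ M) (W : ℝ) (hW : 0 < W)
    (w η : ℕ → ℝ) (hw0 : w 0 = 0)
    (hw : ∀ l, 1 ≤ l → l ≤ K → 0 < w l)
    (hη_pos : ∀ l, l ≤ K → 0 < η l)
    (hη_mono : ∀ l, l < K → η (l + 1) ≤ η l)
    (P : ℝ) (hP : 0 < P)
    (x : ℕ → ℝ) (hx : x ∈ sicSet K M P)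
    (hmax : ∀ y ∈ sicSet K M P, objSC K W w η y ≤ objSC K W w η x) :
    x 1 = P :=
  stmt_7_general K M hK hM W hW w η hw0 hw hη_pos P x hx hmax
end

section
/- Consider N ≥ 1 subcarriers with single-carrier value functions F^n as above (each F^n nondecreasing), P_max > 0, δ > 0, J = ⌊P_max/δ⌋ with J ≥ N, and Δ = ⌊J/N⌋·δ. Define F*_MCKP(P) = sup{Σ_{n=1}^{N} F^n(P̄^n) : Σ_n P̄^n ≤ P and each P̄^n ∈ {l·δ : l ∈ ℕ}}, and define G = sup{Σ_{n=1}^{N} F^n(P̄^n) : Σ_n P̄^n ≤ 2·P_max and each P̄^n ∈ {l·Δ : l ∈ ℕ, l ≤ 2N}}. Then F*_MCKP(P_max) ≤ G ≤ 2·F*_MCKP(P_max). -/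
/-!
Every coarse budget `l·Δ` is a multiple of `δ`, so MCKP′ is a δ-grid problem with budget
`2·P_max` and `G ≤ F*_MCKP(2·P_max) ≤ 2·F*_MCKP(P_max)` by subadditivity. Conversely,
rounding each budget of a δ-grid allocation up to the next multiple of `Δ` costs less than
`Δ` per subcarrier, hence at most `N·Δ ≤ P_max` in total; since `P_max ≤ 2N·Δ` the rounded
budgets stay below `2N·Δ`, and monotonicity of the `F^n` shows the value does not drop.
-/

open Finset

/-- `F*_MCKP(P)` is the supremum of this set for `A = δℕ`, and `G` for `A = {l·Δ : l ≤ 2N}`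
and budget `2·P_max`. -/
def allocValues (N : ℕ) (F : ℕ → ℝ → ℝ) (A : ℝ → Prop) (P : ℝ) : Set ℝ :=
  {v | ∃ Q : ℕ → ℝ, (∑ n ∈ Icc 1 N, Q n) ≤ P ∧
    (∀ n, 1 ≤ n → n ≤ N → A (Q n)) ∧ v = ∑ n ∈ Icc 1 N, F n (Q n)}

section allocValues

variable {N : ℕ} {F : ℕ → ℝ → ℝ} {A B : ℝ → Prop} {P P' : ℝ}

lemma allocValues_nonempty (hA : A 0) (hP : 0 ≤ P) : (allocValues N F A P).Nonempty :=
  ⟨_, fun _ => 0, by simpa using hP, fun _ _ _ => hA, rfl⟩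

lemma allocValues_mono (hAB : ∀ x, A x → B x) (hP : P ≤ P') :
    allocValues N F A P ⊆ allocValues N F B P' := by
  rintro v ⟨Q, hsum, hQ, rfl⟩
  exact ⟨Q, hsum.trans hP, fun n h1 h2 => hAB _ (hQ n h1 h2), rfl⟩

lemma le_budget_of_nonneg {Q : ℕ → ℝ} (hQ : ∀ n, 1 ≤ n → n ≤ N → 0 ≤ Q n)
    (hsum : (∑ n ∈ Icc 1 N, Q n) ≤ P) {n : ℕ} (hn : n ∈ Icc 1 N) : Q n ≤ P :=
  (single_le_sum (fun m hm => hQ m (mem_Icc.1 hm).1 (mem_Icc.1 hm).2) hn).trans hsum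

lemma allocValues_bddAbove (hF : ∀ n, 1 ≤ n → n ≤ N → Monotone (F n))
    (hA : ∀ x, A x → 0 ≤ x) : BddAbove (allocValues N F A P) := by
  refine ⟨∑ n ∈ Icc 1 N, F n P, ?_⟩
  rintro v ⟨Q, hsum, hQ, rfl⟩
  refine sum_le_sum fun n hn => hF n (mem_Icc.1 hn).1 (mem_Icc.1 hn).2 ?_
  exact le_budget_of_nonneg (fun m h1 h2 => hA _ (hQ m h1 h2)) hsum hn

end allocValues

lemma le_natCeil_div_mul {x Δ : ℝ} (hΔ : 0 < Δ) : x ≤ ⌈x / Δ⌉₊ * Δ :=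
  (div_le_iff₀ hΔ).1 (Nat.le_ceil _)

lemma natCeil_div_mul_lt {x Δ : ℝ} (hΔ : 0 < Δ) (hx : 0 ≤ x) : ⌈x / Δ⌉₊ * Δ < x + Δ := by
  have h := Nat.ceil_lt_add_one (div_nonneg hx hΔ.le)
  calc (⌈x / Δ⌉₊ : ℝ) * Δ < (x / Δ + 1) * Δ := mul_lt_mul_of_pos_right h hΔ
    _ = x + Δ := by field_simp

lemma exists_coarse_alloc_ge {N : ℕ} {Δ P : ℝ} (hΔ : 0 < Δ) (hNΔ : N * Δ ≤ P)
    (hPΔ : P ≤ 2 * N * Δ) {Q : ℕ → ℝ} (hQ : ∀ n, 1 ≤ n → n ≤ N → 0 ≤ Q n)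
    (hsum : (∑ n ∈ Icc 1 N, Q n) ≤ P) :
    ∃ Q' : ℕ → ℝ, (∑ n ∈ Icc 1 N, Q' n) ≤ 2 * P ∧
      (∀ n, 1 ≤ n → n ≤ N → ∃ l : ℕ, l ≤ 2 * N ∧ Q' n = l * Δ) ∧
      ∀ n ∈ Icc 1 N, Q n ≤ Q' n := by
  refine ⟨fun n => ⌈Q n / Δ⌉₊ * Δ, ?_, fun n h1 h2 => ⟨_, ?_, rfl⟩,
    fun n _ => le_natCeil_div_mul hΔ⟩
  · calc ∑ n ∈ Icc 1 N, (⌈Q n / Δ⌉₊ : ℝ) * Δ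
          ≤ ∑ n ∈ Icc 1 N, (Q n + Δ) := sum_le_sum fun n hn =>
            (natCeil_div_mul_lt hΔ (hQ n (mem_Icc.1 hn).1 (mem_Icc.1 hn).2)).le
      _ = (∑ n ∈ Icc 1 N, Q n) + N * Δ := by simp [sum_add_distrib]
      _ ≤ 2 * P := by linarith
  · rw [Nat.ceil_le, div_le_iff₀ hΔ]
    push_cast
    exact (le_budget_of_nonneg hQ hsum (mem_Icc.2 ⟨h1, h2⟩)).trans hPΔ

lemma sSup_allocValues_le_sSup_coarse {N : ℕ} {F : ℕ → ℝ → ℝ} {A : ℝ → Prop} {Δ P : ℝ}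
    (hF : ∀ n, 1 ≤ n → n ≤ N → Monotone (F n)) (hA : ∀ x, A x → 0 ≤ x) (hA0 : A 0)
    (hΔ : 0 < Δ) (hNΔ : N * Δ ≤ P) (hPΔ : P ≤ 2 * N * Δ) :
    sSup (allocValues N F A P) ≤
      sSup (allocValues N F (fun x => ∃ l : ℕ, l ≤ 2 * N ∧ x = l * Δ) (2 * P)) := by
  have hP : 0 ≤ P := le_trans (by positivity) hNΔ
  refine csSup_le (allocValues_nonempty hA0 hP) ?_
  rintro v ⟨Q, hsum, hQ, rfl⟩
  obtain ⟨Q', hsum', hQ', hle⟩ :=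
    exists_coarse_alloc_ge hΔ hNΔ hPΔ (fun n h1 h2 => hA _ (hQ n h1 h2)) hsum
  refine le_csSup_of_le (allocValues_bddAbove hF ?_) ⟨Q', hsum', hQ', rfl⟩ ?_
  · rintro x ⟨l, -, rfl⟩
    positivity
  · exact sum_le_sum fun n hn => hF n (mem_Icc.1 hn).1 (mem_Icc.1 hn).2 (hle n hn)

lemma succ_le_two_mul_mul_div {J N : ℕ} (hN : 0 < N) (hJN : N ≤ J) :
    J + 1 ≤ 2 * N * (J / N) := by
  have hq : N ≤ J / N * N := Nat.le_mul_of_pos_left N ((Nat.one_le_div_iff hN).2 hJN)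
  have := Nat.lt_div_mul_add (a := J) hN
  nlinarith

lemma coarse_spacing_bounds {N J : ℕ} {P δ : ℝ} (hN : 0 < N) (hδ : 0 < δ) (hP : 0 ≤ P)
    (hJN : N ≤ J) (hJ : J = ⌊P / δ⌋₊) :
    N * ((J / N : ℕ) * δ) ≤ P ∧ P ≤ 2 * N * ((J / N : ℕ) * δ) := by
  have hJδ : (J : ℝ) * δ ≤ P := hJ ▸ (le_div_iff₀ hδ).1 (Nat.floor_le (div_nonneg hP hδ.le))
  have hJδ' : P < (J + 1) * δ := hJ ▸ (div_lt_iff₀ hδ).1 (Nat.lt_floor_add_one _)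
  have hdiv : ((J / N * N : ℕ) : ℝ) ≤ J := by exact_mod_cast Nat.div_mul_le_self J N
  have hsucc : ((J + 1 : ℕ) : ℝ) ≤ ((2 * N * (J / N) : ℕ) : ℝ) := by
    exact_mod_cast succ_le_two_mul_mul_div hN hJN
  push_cast at hdiv hsucc
  constructor <;> nlinarith

theorem stmt_14_general
    (N : ℕ) (hN : 1 ≤ N)
    (F : ℕ → ℝ → ℝ) (hF : ∀ n, 1 ≤ n → n ≤ N → Monotone (F n))
    (Pmax δ : ℝ) (hPmax : 0 < Pmax) (hδ : 0 < δ)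
    (J : ℕ) (hJ : J = ⌊Pmax / δ⌋₊) (hJN : N ≤ J)
    (Δ : ℝ) (hΔ : Δ = (↑(J / N) : ℝ) * δ)
    (FMCKP : ℝ → ℝ)
    (hFMCKP : ∀ P : ℝ, FMCKP P = sSup {v : ℝ | ∃ Q : ℕ → ℝ,
      (∑ n ∈ Finset.Icc 1 N, Q n) ≤ P ∧
      (∀ n, 1 ≤ n → n ≤ N → ∃ l : ℕ, Q n = (l : ℝ) * δ) ∧
      v = ∑ n ∈ Finset.Icc 1 N, F n (Q n)})
    (hsub : ∀ P₁ P₂ : ℝ, 0 ≤ P₁ → 0 ≤ P₂ → FMCKP (P₁ + P₂) ≤ FMCKP P₁ + FMCKP P₂)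
    (G : ℝ)
    (hG : G = sSup {v : ℝ | ∃ Q : ℕ → ℝ,
      (∑ n ∈ Finset.Icc 1 N, Q n) ≤ 2 * Pmax ∧
      (∀ n, 1 ≤ n → n ≤ N → ∃ l : ℕ, l ≤ 2 * N ∧ Q n = (l : ℝ) * Δ) ∧
      v = ∑ n ∈ Finset.Icc 1 N, F n (Q n)}) :
    FMCKP Pmax ≤ G ∧ G ≤ 2 * FMCKP Pmax := by
  have hFgrid : ∀ P, FMCKP P = sSup (allocValues N F (fun x => ∃ l : ℕ, x = l * δ) P) := hFMCKP
  have hGcoarse : G = sSup (allocValues N F (fun x => ∃ l : ℕ, l ≤ 2 * N ∧ x = l * Δ) (2 * Pmax)) :=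
    hG
  have hgrid_nonneg : ∀ x, (∃ l : ℕ, x = l * δ) → 0 ≤ x := by
    rintro x ⟨l, rfl⟩
    positivity
  obtain ⟨hNΔ, hPΔ⟩ : N * Δ ≤ Pmax ∧ Pmax ≤ 2 * N * Δ :=
    hΔ ▸ coarse_spacing_bounds hN hδ hPmax.le hJN hJ
  have hΔpos : 0 < Δ := hΔ ▸ mul_pos (by exact_mod_cast (Nat.one_le_div_iff hN).2 hJN) hδ
  refine ⟨?_, ?_⟩
  · rw [hFgrid, hGcoarse]
    exact sSup_allocValues_le_sSup_coarse hF hgrid_nonneg ⟨0, by simp⟩ hΔpos hNΔ hPΔ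
  · have hcoarse_sub : G ≤ FMCKP (2 * Pmax) := by
      rw [hGcoarse, hFgrid]
      refine csSup_le_csSup (allocValues_bddAbove hF hgrid_nonneg)
        (allocValues_nonempty ⟨0, by simp⟩ (by positivity)) (allocValues_mono ?_ le_rfl)
      rintro x ⟨l, -, rfl⟩
      exact ⟨l * (J / N), by rw [hΔ]; push_cast; ring⟩
    have hdouble := hsub Pmax Pmax hPmax.le hPmax.le
    rw [← two_mul] at hdouble
    linarith

/-- **Coarse-grid estimation in ε-JSPA.** With nondecreasing single-carrier value
functions `F^n`, `J = ⌊P_max/δ⌋ ≥ N` and coarse grid spacing `Δ = ⌊J/N⌋·δ`, the optimal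
value `G` of the coarse-grid problem MCKP′ (budget `2·P_max`, budgets of the form `l·Δ`
with `l ≤ 2N`) satisfies `F*_MCKP(P_max) ≤ G ≤ 2·F*_MCKP(P_max)`, where `F*_MCKP(P)` is
the optimal value of the `δ`-grid problem with budget `P`, taken to be nondecreasing and
subadditive. -/
theorem stmt_14
    (N : ℕ) (hN : 1 ≤ N)
    (F : ℕ → ℝ → ℝ) (hF : ∀ n, 1 ≤ n → n ≤ N → Monotone (F n))
    (Pmax δ : ℝ) (hPmax : 0 < Pmax) (hδ : 0 < δ)
    (J : ℕ) (hJ : J = ⌊Pmax / δ⌋₊) (hJN : N ≤ J)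
    (Δ : ℝ) (hΔ : Δ = (↑(J / N) : ℝ) * δ)
    (FMCKP : ℝ → ℝ)
    (hFMCKP : ∀ P : ℝ, FMCKP P = sSup {v : ℝ | ∃ Q : ℕ → ℝ,
      (∑ n ∈ Finset.Icc 1 N, Q n) ≤ P ∧
      (∀ n, 1 ≤ n → n ≤ N → ∃ l : ℕ, Q n = (l : ℝ) * δ) ∧
      v = ∑ n ∈ Finset.Icc 1 N, F n (Q n)})
    (hmono : ∀ P₁ P₂ : ℝ, 0 ≤ P₁ → P₁ ≤ P₂ → FMCKP P₁ ≤ FMCKP P₂)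
    (hsub : ∀ P₁ P₂ : ℝ, 0 ≤ P₁ → 0 ≤ P₂ → FMCKP (P₁ + P₂) ≤ FMCKP P₁ + FMCKP P₂)
    (G : ℝ)
    (hG : G = sSup {v : ℝ | ∃ Q : ℕ → ℝ,
      (∑ n ∈ Finset.Icc 1 N, Q n) ≤ 2 * Pmax ∧
      (∀ n, 1 ≤ n → n ≤ N → ∃ l : ℕ, l ≤ 2 * N ∧ Q n = (l : ℝ) * Δ) ∧
      v = ∑ n ∈ Finset.Icc 1 N, F n (Q n)}) :
    FMCKP Pmax ≤ G ∧ G ≤ 2 * FMCKP Pmax :=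
  stmt_14_general N hN F hF Pmax δ hPmax hδ J hJ hJN Δ hΔ FMCKP hFMCKP hsub G hG
end
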